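/- arXiv:1007.0473 — 2 statements merged into one kernel-verified Lean document; each statement's English description precedes it below -/
import Mathlib

section
/- Let 𝔛 be a symmetric association scheme of class d ≥ 2 that is a Q-polynomial scheme with respect to the ordering E_0, E_1, …, E_d of its primitive idempotents, and suppose θ*_0, θ*_1, …, θ*_d are mutually distinct. Then for every i ∈ {1, 2, …, d}, ∏_{j=1, j≠i}^d (θ*_0 − θ*_j)/(θ*_i − θ*_j) = −p_i(d). -/
open Matrix BigOperators Finset

/-- A symmetric association scheme of class `d` on a finite vertex set `V`,
bundled together with its adjacency matrices, primitive idempotents,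
eigenmatrices `P`, `Q` and Krein parameters. -/
structure SymmAssocScheme (d : ℕ) (V : Type*) [Fintype V] [DecidableEq V] where
  /-- the relations `R_0, …, R_d` -/
  R : Fin (d + 1) → Set (V × V)
  R_nonempty : ∀ i, (R i).Nonempty
  R_zero : R 0 = {p : V × V | p.1 = p.2}
  R_cover : ∀ p : V × V, ∃ i, p ∈ R i
  R_disjoint : ∀ i j, i ≠ j → R i ∩ R j = ∅
  R_symm : ∀ i, ∀ x y : V, (x, y) ∈ R i → (y, x) ∈ R i
  /-- the intersection numbers `p_{ij}^k` -/
  pnum : Fin (d + 1) → Fin (d + 1) → Fin (d + 1) → ℕ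
  pnum_spec : ∀ i j k, ∀ x y : V, (x, y) ∈ R k →
    pnum i j k = {z : V | (x, z) ∈ R i ∧ (z, y) ∈ R j}.ncard
  /-- the adjacency matrices `A_0, …, A_d` -/
  A : Fin (d + 1) → Matrix V V ℂ
  A_of_mem : ∀ i, ∀ x y : V, (x, y) ∈ R i → A i x y = 1
  A_of_not_mem : ∀ i, ∀ x y : V, (x, y) ∉ R i → A i x y = 0
  /-- the primitive idempotents `E_0, …, E_d` -/
  E : Fin (d + 1) → Matrix V V ℂ
  E_zero : E 0 = (Fintype.card V : ℂ)⁻¹ • Matrix.of (fun _ _ => (1 : ℂ))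
  E_sum : ∑ i, E i = (1 : Matrix V V ℂ)
  E_mul : ∀ i j, E i * E j = if i = j then E i else 0
  E_ne_zero : ∀ i, E i ≠ 0
  /-- the first eigenmatrix: `P i j = p_i(j)` -/
  P : Fin (d + 1) → Fin (d + 1) → ℝ
  /-- the second eigenmatrix: `Q i j = q_i(j)`; in particular `θ*_j = Q 1 j` -/
  Q : Fin (d + 1) → Fin (d + 1) → ℝ
  A_eq : ∀ i, A i = ∑ j, (P i j : ℂ) • E j
  E_eq : ∀ i, E i = (Fintype.card V : ℂ)⁻¹ • ∑ j, (Q i j : ℂ) • A j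
  /-- the Krein parameters `q_{ij}^k` -/
  krein : Fin (d + 1) → Fin (d + 1) → Fin (d + 1) → ℝ
  krein_spec : ∀ i j, Matrix.hadamard (E i) (E j) =
    (Fintype.card V : ℂ)⁻¹ • ∑ k, (krein i j k : ℂ) • E k
  krein_nonneg : ∀ i j k, 0 ≤ krein i j k

namespace SymmAssocScheme

variable {d : ℕ} {V : Type*} [Fintype V] [DecidableEq V]

/-- the `h`-fold Hadamard power `E_1^{∘h}` of `E_1`, with `E_1^{∘0} = J`
the all-ones matrix. -/
noncomputable def hadPowE1 (S : SymmAssocScheme d V) : ℕ → Matrix V V ℂ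
  | 0 => Matrix.of fun _ _ => 1
  | n + 1 => Matrix.hadamard (hadPowE1 S n) (S.E 1)

/-- `N h` is the set of indices `j` such that `E_j` is a component of `E_1^{∘h}`
(i.e. `E_j · E_1^{∘h} ≠ 0`) but not a component of `E_1^{∘l}` for any `l < h`. -/
def N (S : SymmAssocScheme d V) (h : ℕ) : Set (Fin (d + 1)) :=
  {j | S.E j * S.hadPowE1 h ≠ 0 ∧ ∀ l < h, S.E j * S.hadPowE1 l = 0}

/-- `𝔛` is `Q`-polynomial with respect to the ordering `E_{σ 0}, E_{σ 1}, …, E_{σ d}`: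
for each `h` there is a polynomial `v*_h` of degree exactly `h` with
`q_{σ h}(j) = v*_h(q_1(j))` for all `j`. -/
def IsQPolyOrdering (S : SymmAssocScheme d V) (σ : Equiv.Perm (Fin (d + 1))) : Prop :=
  ∀ h : Fin (d + 1), ∃ v : Polynomial ℝ, v.degree = (h : ℕ) ∧
    ∀ j, S.Q (σ h) j = v.eval (S.Q 1 j)

/-- `𝔛` is `Q`-polynomial with respect to `E_1`: it is `Q`-polynomial with respect
to some ordering of the form `E_0, E_1, E_{i_2}, …, E_{i_d}`. -/
def IsQPolyE1 (S : SymmAssocScheme d V) : Prop :=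
  ∃ σ : Equiv.Perm (Fin (d + 1)), σ 0 = 0 ∧ σ 1 = 1 ∧ S.IsQPolyOrdering σ

/-- `𝔛` is `P`-polynomial with respect to the ordering `A_{σ 0}, A_{σ 1}, …, A_{σ d}`. -/
def IsPPolyOrdering (S : SymmAssocScheme d V) (σ : Equiv.Perm (Fin (d + 1))) : Prop :=
  ∀ h : Fin (d + 1), ∃ v : Polynomial ℝ, v.degree = (h : ℕ) ∧
    ∀ j, S.P (σ h) j = v.eval (S.P 1 j)

/-- `𝔛` is `P`-polynomial with respect to `A_1`. -/
def IsPPolyA1 (S : SymmAssocScheme d V) : Prop :=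
  ∃ σ : Equiv.Perm (Fin (d + 1)), σ 0 = 0 ∧ σ 1 = 1 ∧ S.IsPPolyOrdering σ

/-- the ratio `K_i = ∏_{j=1, j≠i}^d (θ*_0 − θ*_j)/(θ*_i − θ*_j)`,
where `θ*_j = q_1(j)`. -/
noncomputable def K (S : SymmAssocScheme d V) (i : Fin (d + 1)) : ℝ :=
  ∏ j ∈ Finset.univ.filter (fun j => j ≠ 0 ∧ j ≠ i),
    (S.Q 1 0 - S.Q 1 j) / (S.Q 1 i - S.Q 1 j)

end SymmAssocScheme

/-! Write `θ*_j = q_1(j)` and `w_j = p_j(d)`. Since `q_h = v*_h(θ*)` with `deg v*_h = h`, the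
orthogonality relations `∑_j q_h(j) p_j(d) = 0` for `h < d` say that the functional
`f ↦ ∑_j w_j f(θ*_j)` kills every polynomial of degree `< d`. On the Lagrange basis polynomial
`L_i` of the nodes `θ*_0, …, θ*_d` it takes the value `w_i`, and it only sees the leading
coefficient `∏_{j ≠ i} (θ*_i - θ*_j)⁻¹` of `L_i`; hence `w_i ∏_{j ≠ i} (θ*_i - θ*_j)` does not
depend on `i`. Comparing `i` with `0`, where `w_0 = p_0(d) = 1`, gives the formula. -/

open Polynomial

namespace Polynomial

section WeightedEval

variable {K ι : Type*} [CommSemiring K] [Fintype ι]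

noncomputable def weightedEval (x w : ι → K) : K[X] →ₗ[K] K :=
  ∑ j, w j • leval (x j)

@[simp]
theorem weightedEval_apply (x w : ι → K) (f : K[X]) :
    weightedEval x w f = ∑ j, w j * f.eval (x j) := by
  simp [weightedEval]

end WeightedEval

variable {K M : Type*} [Field K] [AddCommGroup M] [Module K M]

theorem Sequence.map_eq_zero_of_degree_lt (T : Sequence K) (φ : K[X] →ₗ[K] M) {m : ℕ}
    (hT : ∀ i < m, φ (T i) = 0) {f : K[X]} (hf : f.degree < m) : φ f = 0 := by
  have hspan : f ∈ Submodule.span K (T '' Set.Iio m) := by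
    rw [T.span_degreeLT fun i _ => (leadingCoeff_ne_zero.mpr (T.ne_zero i)).isUnit]
    exact mem_degreeLT.mpr hf
  refine (Submodule.span_le (p := LinearMap.ker φ)).mpr ?_ hspan
  rintro _ ⟨i, hi, rfl⟩
  exact hT i hi

theorem map_eq_leadingCoeff_smul_map_X_pow (φ : K[X] →ₗ[K] M) {m : ℕ}
    (hφ : ∀ f : K[X], f.degree < m → φ f = 0) {f : K[X]} (hf : f.natDegree = m) :
    φ f = f.leadingCoeff • φ (X ^ m) := by
  rcases eq_or_ne f 0 with rfl | hf0
  · simp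
  have hsplit := congrArg φ (eraseLead_add_monomial_natDegree_leadingCoeff f)
  rw [map_add, hφ _ (hf ▸ degree_eq_natDegree hf0 ▸ degree_eraseLead_lt hf0), zero_add,
    hf, ← smul_X_eq_monomial, map_smul] at hsplit
  exact hsplit.symm

end Polynomial

namespace Lagrange

variable {K ι : Type*} [Field K] [Fintype ι] [DecidableEq ι]

theorem weightedEval_basis {x : ι → K} (hx : Function.Injective x) (w : ι → K) (i : ι) :
    weightedEval x w (Lagrange.basis univ x i) = w i := by
  rw [weightedEval_apply, Finset.sum_eq_single i
    (fun j _ hji => by rw [eval_basis_of_ne hji.symm (mem_univ j), mul_zero]) (by simp),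
    eval_basis_self hx.injOn (mem_univ i), mul_one]

theorem eq_inv_prod_mul_of_weightedEval_eq_zero {x w : ι → K} (hx : Function.Injective x)
    {m : ℕ} (hm : Fintype.card ι = m + 1)
    (hw : ∀ f : K[X], f.degree < m → weightedEval x w f = 0) (i : ι) :
    w i = (∏ j ∈ univ.erase i, (x i - x j))⁻¹ * weightedEval x w (X ^ m) := by
  have hdeg : (Lagrange.basis univ x i).natDegree = m := by
    rw [natDegree_basis hx.injOn (mem_univ i), card_univ, hm, Nat.add_sub_cancel]
  rw [← weightedEval_basis hx w i, map_eq_leadingCoeff_smul_map_X_pow _ hw hdeg,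
    leadingCoeff_basis hx.injOn (mem_univ i), smul_eq_mul]

end Lagrange

theorem Finset.prod_filter_ne_ne_sub_div_sub {K ι : Type*} [Field K] [Fintype ι] [DecidableEq ι]
    (x : ι → K) {a b : ι} (hx : x a ≠ x b) :
    ∏ j ∈ univ.filter (fun j => j ≠ a ∧ j ≠ b), (x a - x j) / (x b - x j) =
      -((∏ j ∈ univ.erase a, (x a - x j)) / ∏ j ∈ univ.erase b, (x b - x j)) := by
  have hab : a ≠ b := fun h => hx (congrArg x h)
  have herase : ∀ {c e : ι}, ({c, e} : Finset ι) = {a, b} →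
      (univ.erase c).erase e = univ.filter (fun j => j ≠ a ∧ j ≠ b) := by
    intro c e hce
    ext j
    have := congrArg (j ∈ ·) hce
    simp only [mem_insert, mem_singleton, eq_iff_iff] at this
    simp only [mem_erase, mem_filter, mem_univ]
    tauto
  rw [← mul_prod_erase (univ.erase a) _ (mem_erase.mpr ⟨hab.symm, mem_univ b⟩),
    ← mul_prod_erase (univ.erase b) _ (mem_erase.mpr ⟨hab, mem_univ a⟩), herase rfl,
    herase (pair_comm b a), mul_div_mul_comm, ← neg_sub (x a) (x b),
    div_neg_self (sub_ne_zero.mpr hx), prod_div_distrib]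
  ring

namespace SymmAssocScheme

variable {d : ℕ} {V : Type*} [Fintype V] [DecidableEq V] (S : SymmAssocScheme d V)

theorem card_ne_zero (S : SymmAssocScheme d V) : Fintype.card V ≠ 0 :=
  have ⟨p, _⟩ := S.R_nonempty 0
  have : Nonempty V := ⟨p.1⟩
  Fintype.card_ne_zero

theorem A_zero : S.A 0 = 1 := by
  ext x y
  by_cases hxy : x = y
  · rw [S.A_of_mem 0 x y (by rw [S.R_zero]; exact hxy), hxy, one_apply_eq]
  · rw [S.A_of_not_mem 0 x y (by rw [S.R_zero]; exact hxy), one_apply_ne hxy]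

theorem A_mul_E (i k : Fin (d + 1)) : S.A i * S.E k = (S.P i k : ℂ) • S.E k := by
  simp only [S.A_eq, Finset.sum_mul, smul_mul_assoc, S.E_mul, smul_ite, smul_zero,
    Finset.sum_ite_eq', Finset.mem_univ, if_true]

theorem E_mul_E (h k : Fin (d + 1)) :
    S.E h * S.E k = ((Fintype.card V : ℂ)⁻¹ * ∑ j, (S.Q h j * S.P j k : ℝ)) • S.E k := by
  simp only [S.E_eq h, smul_mul_assoc, Finset.sum_mul, S.A_mul_E, smul_smul, ← Finset.sum_smul]
  push_cast
  rfl

theorem P_zero (k : Fin (d + 1)) : S.P 0 k = 1 := by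
  have h := S.A_mul_E 0 k
  rw [S.A_zero, one_mul] at h
  have hP : (S.P 0 k : ℂ) = 1 :=
    smul_left_injective ℂ (S.E_ne_zero k) (h.symm.trans (one_smul ℂ _).symm)
  exact_mod_cast hP

theorem sum_Q_mul_P_eq_zero {h k : Fin (d + 1)} (hhk : h ≠ k) : ∑ j, S.Q h j * S.P j k = 0 := by
  have h := S.E_mul_E h k
  rw [S.E_mul, if_neg hhk, eq_comm, smul_eq_zero, mul_eq_zero, inv_eq_zero,
    Nat.cast_eq_zero, Complex.ofReal_eq_zero] at h
  exact (h.resolve_right (S.E_ne_zero k)).resolve_left S.card_ne_zero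

theorem exists_sequence_of_isQPolyOrdering (hQ : S.IsQPolyOrdering (Equiv.refl _)) :
    ∃ T : Polynomial.Sequence ℝ, ∀ h : Fin (d + 1), ∀ j, S.Q h j = (T h).eval (S.Q 1 j) := by
  choose v hdeg hval using hQ
  refine ⟨⟨fun n => if hn : n < d + 1 then v ⟨n, hn⟩ else X ^ n, fun n => ?_⟩, fun h j => ?_⟩
  · split_ifs with hn
    exacts [hdeg _, degree_X_pow n]
  · simpa [h.isLt] using hval h j

theorem weightedEval_P_last_eq_zero (hQ : S.IsQPolyOrdering (Equiv.refl _)) {f : ℝ[X]}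
    (hf : f.degree < d) :
    weightedEval (fun j => S.Q 1 j) (fun j => S.P j (Fin.last d)) f = 0 := by
  obtain ⟨T, hT⟩ := S.exists_sequence_of_isQPolyOrdering hQ
  refine T.map_eq_zero_of_degree_lt _ (fun n hn => ?_) hf
  have := S.sum_Q_mul_P_eq_zero (h := ⟨n, by omega⟩) (k := Fin.last d)
    (Fin.ne_of_val_ne (by rw [Fin.val_last]; exact hn.ne))
  rw [weightedEval_apply, ← this]
  exact sum_congr rfl fun j _ => by rw [hT ⟨n, _⟩ j, mul_comm]

theorem P_last_eq (hθ : Function.Injective fun j : Fin (d + 1) => S.Q 1 j)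
    (hQ : S.IsQPolyOrdering (Equiv.refl _)) (i : Fin (d + 1)) :
    S.P i (Fin.last d) =
      (∏ j ∈ univ.erase 0, (S.Q 1 0 - S.Q 1 j)) / ∏ j ∈ univ.erase i, (S.Q 1 i - S.Q 1 j) := by
  have key := Lagrange.eq_inv_prod_mul_of_weightedEval_eq_zero hθ (Fintype.card_fin _)
    fun f hf => S.weightedEval_P_last_eq_zero hQ hf
  have h0 := key 0
  rw [S.P_zero] at h0
  have hprod0 : ∏ j ∈ univ.erase 0, (S.Q 1 0 - S.Q 1 j) ≠ 0 := by
    rintro h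
    simp [h] at h0
  rw [key i, ← (inv_mul_eq_one₀ hprod0).mp h0.symm, inv_mul_eq_div]

end SymmAssocScheme

theorem statement1_general {d : ℕ} {V : Type*} [Fintype V] [DecidableEq V]
    (S : SymmAssocScheme d V)
    (hθ : Function.Injective fun j : Fin (d + 1) => S.Q 1 j)
    (hQpoly : S.IsQPolyOrdering (Equiv.refl (Fin (d + 1)))) :
    ∀ i : Fin (d + 1), i ≠ 0 →
      (∏ j ∈ Finset.univ.filter (fun j => j ≠ 0 ∧ j ≠ i),
        (S.Q 1 0 - S.Q 1 j) / (S.Q 1 i - S.Q 1 j)) = -S.P i (Fin.last d) := by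
  intro i hi
  rw [Finset.prod_filter_ne_ne_sub_div_sub (fun j => S.Q 1 j) (hθ.ne hi.symm),
    S.P_last_eq hθ hQpoly i]

/-- If `𝔛` is a symmetric association scheme of class `d ≥ 2` that is
`Q`-polynomial with respect to the ordering `E_0, E_1, …, E_d` and `θ*_0, …, θ*_d` are
mutually distinct, then `∏_{j=1,j≠i}^d (θ*_0 − θ*_j)/(θ*_i − θ*_j) = −p_i(d)` for
every `i ∈ {1, …, d}`. -/
theorem statement1 {d : ℕ} {V : Type*} [Fintype V] [DecidableEq V]
    (S : SymmAssocScheme d V) (hd : 2 ≤ d)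
    (hθ : Function.Injective fun j : Fin (d + 1) => S.Q 1 j)
    (hQpoly : S.IsQPolyOrdering (Equiv.refl (Fin (d + 1)))) :
    ∀ i : Fin (d + 1), i ≠ 0 →
      (∏ j ∈ Finset.univ.filter (fun j => j ≠ 0 ∧ j ≠ i),
        (S.Q 1 0 - S.Q 1 j) / (S.Q 1 i - S.Q 1 j)) = -S.P i (Fin.last d) :=
  statement1_general S hθ hQpoly
end

section
/- Let 𝔛 be a symmetric association scheme of class d ≥ 2 and let i ∈ {1, 2, …, d−1}. If N_i is empty, then N_{i+1} is also empty. -/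
open Matrix BigOperators Finset

/-!
By `E_k ∘ E_1 = |X|⁻¹ ∑_m q_{k1}^m E_m`, the coefficients of `E_1^{∘h}` in the basis of primitive
idempotents obey a recursion with nonnegative Krein parameters, so `E_m` is a component of
`E_1^{∘(h+1)}` exactly when `q_{k1}^m > 0` for some component `E_k` of `E_1^{∘h}`. If `N_i = ∅`,
every component `E_k` of `E_1^{∘i}` already occurs in some `E_1^{∘l}` with `l < i`, and then `E_m`
occurs in `E_1^{∘(l+1)}` with `l + 1 ≤ i`.
-/

lemma Matrix.sum_hadamard {ι m n α : Type*} [NonUnitalNonAssocSemiring α] (s : Finset ι)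
    (f : ι → Matrix m n α) (B : Matrix m n α) :
    (∑ k ∈ s, f k) ⊙ B = ∑ k ∈ s, f k ⊙ B := by
  ext x y
  simp [Matrix.hadamard_apply, Matrix.sum_apply, Finset.sum_mul]

namespace SymmAssocScheme

variable {d : ℕ} {V : Type*} [Fintype V] [DecidableEq V] (S : SymmAssocScheme d V)

/-- The coefficient of `E_m` in `E_1^{∘h}`. -/
noncomputable def coeffE1 : ℕ → Fin (d + 1) → ℝ
  | 0, m => if m = 0 then (Fintype.card V : ℝ) else 0
  | h + 1, m => (Fintype.card V : ℝ)⁻¹ * ∑ k, coeffE1 h k * S.krein k 1 m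

lemma card_pos (S : SymmAssocScheme d V) : 0 < Fintype.card V := by
  by_contra h
  have : IsEmpty V := Fintype.card_eq_zero_iff.mp (Nat.eq_zero_of_not_pos h)
  exact S.E_ne_zero 0 (Subsingleton.elim _ _)

lemma coeffE1_nonneg (h : ℕ) (m : Fin (d + 1)) : 0 ≤ S.coeffE1 h m := by
  induction h generalizing m with
  | zero => unfold coeffE1; split <;> positivity
  | succ h ih =>
    exact mul_nonneg (by positivity)
      (Finset.sum_nonneg fun k _ => mul_nonneg (ih k) (S.krein_nonneg k 1 m))

lemma coeffE1_succ_pos_iff (h : ℕ) (m : Fin (d + 1)) :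
    0 < S.coeffE1 (h + 1) m ↔ ∃ k, 0 < S.coeffE1 h k ∧ 0 < S.krein k 1 m := by
  have hV : (0 : ℝ) < (Fintype.card V : ℝ)⁻¹ := inv_pos.mpr (Nat.cast_pos.mpr S.card_pos)
  rw [coeffE1, mul_pos_iff_of_pos_left hV, Finset.sum_pos_iff_of_nonneg
    fun k _ => mul_nonneg (S.coeffE1_nonneg h k) (S.krein_nonneg k 1 m)]
  simp only [Finset.mem_univ, true_and]
  refine exists_congr fun k => ⟨fun hk => ?_, fun ⟨hc, hq⟩ => mul_pos hc hq⟩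
  exact (pos_and_pos_or_neg_and_neg_of_mul_pos hk).resolve_right
    fun hneg => (S.coeffE1_nonneg h k).not_gt hneg.1

lemma hadPowE1_eq_sum (h : ℕ) : S.hadPowE1 h = ∑ m, (S.coeffE1 h m : ℂ) • S.E m := by
  induction h with
  | zero =>
    have hV : (Fintype.card V : ℂ) ≠ 0 := Nat.cast_ne_zero.mpr S.card_pos.ne'
    rw [Fintype.sum_eq_single 0 fun m hm => by simp [coeffE1, hm], S.E_zero, smul_smul]
    simp [coeffE1, hadPowE1, hV]
  | succ h ih =>
    calc S.hadPowE1 (h + 1)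
        = ∑ m, ∑ k, ((S.coeffE1 h m : ℂ) * ((Fintype.card V : ℂ)⁻¹ * S.krein m 1 k)) • S.E k := by
          simp only [hadPowE1, ih, Matrix.sum_hadamard, Matrix.smul_hadamard, S.krein_spec,
            Finset.smul_sum, smul_smul]
      _ = ∑ k, (S.coeffE1 (h + 1) k : ℂ) • S.E k := by
          rw [Finset.sum_comm]
          refine Finset.sum_congr rfl fun k _ => ?_
          rw [← Finset.sum_smul, coeffE1]
          push_cast
          rw [Finset.mul_sum]
          exact congrArg (· • S.E k) (Finset.sum_congr rfl fun m _ => by ring)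

lemma E_mul_hadPowE1 (h : ℕ) (m : Fin (d + 1)) :
    S.E m * S.hadPowE1 h = (S.coeffE1 h m : ℂ) • S.E m := by
  rw [S.hadPowE1_eq_sum, Finset.mul_sum, Fintype.sum_eq_single m fun k hk => by
    rw [Matrix.mul_smul, S.E_mul, if_neg hk.symm, smul_zero]]
  rw [Matrix.mul_smul, S.E_mul, if_pos rfl]

lemma E_mul_hadPowE1_ne_zero_iff (h : ℕ) (m : Fin (d + 1)) :
    S.E m * S.hadPowE1 h ≠ 0 ↔ 0 < S.coeffE1 h m := by
  rw [S.E_mul_hadPowE1, Ne, smul_eq_zero, not_or, Complex.ofReal_eq_zero,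
    (S.coeffE1_nonneg h m).lt_iff_ne', and_iff_left (S.E_ne_zero m)]

lemma exists_lt_coeffE1_pos_of_N_eq_empty {h : ℕ} (hN : S.N h = ∅) {k : Fin (d + 1)}
    (hk : 0 < S.coeffE1 h k) : ∃ l < h, 0 < S.coeffE1 l k := by
  have hkN : k ∉ S.N h := hN ▸ Set.notMem_empty k
  simp only [N, Set.mem_ofPred_eq, not_and, not_forall, exists_prop,
    S.E_mul_hadPowE1_ne_zero_iff] at hkN
  exact hkN hk

end SymmAssocScheme

theorem statement5_general {d : ℕ} {V : Type*} [Fintype V] [DecidableEq V]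
    (S : SymmAssocScheme d V)
    (i : ℕ) (hN : S.N i = ∅) :
    S.N (i + 1) = ∅ := by
  refine Set.eq_empty_of_forall_notMem fun m ⟨hm, hlower⟩ => ?_
  rw [S.E_mul_hadPowE1_ne_zero_iff, S.coeffE1_succ_pos_iff] at hm
  obtain ⟨k, hk, hkm⟩ := hm
  obtain ⟨l, hl, hlk⟩ := S.exists_lt_coeffE1_pos_of_N_eq_empty hN hk
  have hlm : 0 < S.coeffE1 (l + 1) m := (S.coeffE1_succ_pos_iff l m).mpr ⟨k, hlk, hkm⟩
  exact (S.E_mul_hadPowE1_ne_zero_iff (l + 1) m).mpr hlm (hlower (l + 1) (by omega))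

/-- For a symmetric association scheme of class `d ≥ 2` and
`i ∈ {1, …, d−1}`: if `N_i` is empty, then `N_{i+1}` is empty. -/
theorem statement5 {d : ℕ} {V : Type*} [Fintype V] [DecidableEq V]
    (S : SymmAssocScheme d V) (hd : 2 ≤ d)
    (i : ℕ) (hi1 : 1 ≤ i) (hi2 : i ≤ d - 1) (hN : S.N i = ∅) :
    S.N (i + 1) = ∅ :=
  statement5_general S i hN
end
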